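/- Fix κ > 0 and integers ℓ ≥ 0, |m'| ≤ ℓ. Define B_ℓ^{m'} := ∫₀^∞ [γ_ℓ^{m'} P_ℓ^{m'}(1 + ζ/(2κ))]² ζ^{1/2} e^{-ζ} dζ with γ_ℓ^{m'} = [((2ℓ+1)/(4π))·(ℓ-m')!/(ℓ+m')!]^{1/2}. Then C_ℓ^{m'} ≤ B_ℓ^{m'} ≤ e^{4κ}·C_ℓ^{m'}, where C_ℓ^{m'} := (1/(4π²κ^{2ℓ})) · (2ℓ+1)·Γ(ℓ+1/2)² / ((ℓ+m')!(ℓ-m')!) · Γ(2ℓ+3/2). -/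

import Mathlib

open Finset MeasureTheory

/-- Associated Legendre function on `[1,∞)` (explicit sum formula), for `0 ≤ m ≤ ℓ`. -/
noncomputable def legP (ℓ m : ℕ) (z : ℝ) : ℝ :=
  ((Nat.factorial (ℓ + m) : ℝ) / (2 ^ ℓ * (Nat.factorial ℓ : ℝ))) *
    ∑ k ∈ range (ℓ - m + 1),
      (Nat.choose ℓ k : ℝ) * (Nat.choose ℓ (m + k) : ℝ) *
        (z - 1) ^ ((ℓ : ℝ) - (m : ℝ) / 2 - (k : ℝ)) *
        (z + 1) ^ ((m : ℝ) / 2 + (k : ℝ))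

/-- Associated Legendre function for integer order `m` with `|m| ≤ ℓ`, using
`P_ℓ^{-m} = ((ℓ-m)!/(ℓ+m)!)·P_ℓ^m`. -/
noncomputable def legPZ (ℓ : ℕ) (m : ℤ) (z : ℝ) : ℝ :=
  if 0 ≤ m then legP ℓ m.toNat z
  else ((Nat.factorial (ℓ - m.natAbs) : ℝ) / (Nat.factorial (ℓ + m.natAbs) : ℝ)) *
    legP ℓ m.natAbs z

/-- Spherical-harmonic normalization constant `γ_ℓ^m`. -/
noncomputable def gammaCoeff (ℓ : ℕ) (m : ℤ) : ℝ :=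
  Real.sqrt ((2 * (ℓ : ℝ) + 1) / (4 * Real.pi) *
    (Nat.factorial ((ℓ : ℤ) - m).toNat : ℝ) / (Nat.factorial ((ℓ : ℤ) + m).toNat : ℝ))

/-!
For `z > 1` each term of the explicit sum for `P_ℓ^m(z)` is its binomial weight times a number
between `(z - 1)^ℓ` and `(z + 1)^ℓ`, and by Vandermonde the weights add up to a multiple of
`Γ(ℓ + 1/2)`. At `z = 1 + ζ/(2κ)` the integrand of `B_ℓ^{m'}` is therefore squeezed between
`c ζ^{2ℓ+1/2} e^{-ζ}` and `c (ζ + 4κ)^{2ℓ+1/2} e^{-ζ} = c e^{4κ} η^{2ℓ+1/2} e^{-η}` with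
`η = ζ + 4κ` and `c Γ(2ℓ + 3/2) = C_ℓ^{m'}`; integrating both sides against the Gamma integral
gives the two bounds.
-/

open Real Set
open scoped Nat

theorem Nat.sum_range_choose_mul_choose_add {ℓ m : ℕ} (hm : m ≤ ℓ) :
    ∑ k ∈ range (ℓ - m + 1), ℓ.choose k * ℓ.choose (m + k) = (2 * ℓ).choose (ℓ - m) := by
  rw [two_mul, Nat.add_choose_eq, Finset.Nat.sum_antidiagonal_eq_sum_range_succ_mk]
  refine Finset.sum_congr rfl fun k hk => ?_
  rw [Finset.mem_range] at hk
  rw [show ℓ - m - k = ℓ - (m + k) by omega, Nat.choose_symm (by omega)]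

theorem Nat.factorial_two_mul_eq (n : ℕ) : (2 * n)! = 2 ^ n * n ! * (2 * n - 1)‼ := by
  cases n with
  | zero => rfl
  | succ n =>
    rw [show 2 * (n + 1) - 1 = 2 * n + 1 by omega, show 2 * (n + 1) = 2 * n + 1 + 1 by ring,
      Nat.factorial_eq_mul_doubleFactorial, show 2 * n + 1 + 1 = 2 * (n + 1) by ring,
      Nat.doubleFactorial_two_mul]

theorem Real.pow_le_rpow_mul_rpow {a b e₁ e₂ : ℝ} {n : ℕ} (ha : 0 < a) (hab : a ≤ b)
    (h₂ : 0 ≤ e₂) (he : e₁ + e₂ = n) : a ^ n ≤ a ^ e₁ * b ^ e₂ :=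
  calc a ^ n = a ^ e₁ * a ^ e₂ := by rw [← rpow_natCast, ← he, rpow_add ha]
    _ ≤ a ^ e₁ * b ^ e₂ := by gcongr

theorem Real.rpow_mul_rpow_le_pow {a b e₁ e₂ : ℝ} {n : ℕ} (ha : 0 < a) (hab : a ≤ b)
    (h₁ : 0 ≤ e₁) (he : e₁ + e₂ = n) : a ^ e₁ * b ^ e₂ ≤ b ^ n := by
  have hb : 0 < b := ha.trans_le hab
  calc a ^ e₁ * b ^ e₂ ≤ b ^ e₁ * b ^ e₂ := by gcongr
    _ = b ^ n := by rw [← rpow_add hb, he, rpow_natCast]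

section Shift

variable {E : Type*} [NormedAddCommGroup E]

theorem IntegrableOn.comp_add_right_Ioi {f : ℝ → E} {a b : ℝ}
    (hf : IntegrableOn f (Ioi (b + a))) : IntegrableOn (fun x => f (x + a)) (Ioi b) := by
  have := ((measurePreserving_add_right volume a).integrableOn_comp_preimage
    (measurableEmbedding_addRight a)).2 hf
  rwa [preimage_add_const_Ioi, add_sub_cancel_right] at this

theorem setIntegral_Ioi_comp_add_right [NormedSpace ℝ E] (f : ℝ → E) (a b : ℝ) :
    ∫ x in Ioi b, f (x + a) = ∫ x in Ioi (b + a), f x := by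
  simpa [preimage_add_const_Ioi] using
    (measurePreserving_add_right volume a).setIntegral_preimage_emb
      (measurableEmbedding_addRight a) f (Ioi (b + a))

end Shift

theorem integral_exp_neg_mul_rpow_add_le {a s : ℝ} (ha : 0 ≤ a) (hs : 0 < s) :
    IntegrableOn (fun x => exp (-x) * (x + a) ^ (s - 1)) (Ioi 0) ∧
      ∫ x in Ioi 0, exp (-x) * (x + a) ^ (s - 1) ≤ exp a * Gamma s := by
  set G : ℝ → ℝ := fun x => exp (-x) * x ^ (s - 1)
  have hshift : (fun x => exp (-x) * (x + a) ^ (s - 1)) = fun x => exp a * G (x + a) := by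
    ext x
    simp only [G, ← mul_assoc, ← exp_add]
    ring_nf
  have hG : IntegrableOn G (Ioi (0 + a)) :=
    (GammaIntegral_convergent hs).mono_set (Ioi_subset_Ioi (by linarith))
  rw [hshift]
  refine ⟨(IntegrableOn.comp_add_right_Ioi hG).const_mul _, ?_⟩
  rw [integral_const_mul, setIntegral_Ioi_comp_add_right, Gamma_eq_integral hs]
  refine mul_le_mul_of_nonneg_left (setIntegral_mono_set (GammaIntegral_convergent hs) ?_ ?_)
    (exp_pos a).le
  · filter_upwards [ae_restrict_mem measurableSet_Ioi] with x hx
    exact mul_nonneg (exp_pos _).le (rpow_nonneg (le_of_lt hx) _)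
  · exact (Set.Ioi_subset_Ioi (by linarith)).eventuallyLE

theorem mul_Gamma_le_integral_le_exp_mul_Gamma {F : ℝ → ℝ} {a c s : ℝ} (ha : 0 ≤ a)
    (hc : 0 ≤ c) (hs : 0 < s) (hF : AEStronglyMeasurable F (volume.restrict (Ioi 0)))
    (hlow : ∀ x ∈ Ioi (0 : ℝ), c * (exp (-x) * x ^ (s - 1)) ≤ F x)
    (hup : ∀ x ∈ Ioi (0 : ℝ), F x ≤ c * (exp (-x) * (x + a) ^ (s - 1))) :
    c * Gamma s ≤ ∫ x in Ioi 0, F x ∧ ∫ x in Ioi 0, F x ≤ exp a * (c * Gamma s) := by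
  obtain ⟨hUint, hUle⟩ := integral_exp_neg_mul_rpow_add_le ha hs
  have hFint : IntegrableOn F (Ioi 0) := by
    refine (hUint.const_mul c).mono' hF ((ae_restrict_iff' measurableSet_Ioi).2 (ae_of_all _ ?_))
    intro x hx
    have hlow₀ : 0 ≤ c * (exp (-x) * x ^ (s - 1)) :=
      mul_nonneg hc (mul_nonneg (exp_pos _).le (rpow_nonneg (le_of_lt hx) _))
    rw [Real.norm_eq_abs, abs_of_nonneg (hlow₀.trans (hlow x hx))]
    exact hup x hx
  constructor
  · rw [Gamma_eq_integral hs, ← integral_const_mul]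
    exact setIntegral_mono_on ((GammaIntegral_convergent hs).const_mul c) hFint measurableSet_Ioi
      hlow
  · calc ∫ x in Ioi 0, F x ≤ ∫ x in Ioi 0, c * (exp (-x) * (x + a) ^ (s - 1)) :=
          setIntegral_mono_on hFint (hUint.const_mul c) measurableSet_Ioi hup
      _ = c * ∫ x in Ioi 0, exp (-x) * (x + a) ^ (s - 1) := integral_const_mul _ _
      _ ≤ c * (exp a * Gamma s) := mul_le_mul_of_nonneg_left hUle hc
      _ = exp a * (c * Gamma s) := by ring

theorem legP_prefactor_mul_choose {ℓ m : ℕ} (hm : m ≤ ℓ) :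
    ((ℓ + m)! / (2 ^ ℓ * ℓ !) : ℝ) * (2 * ℓ).choose (ℓ - m) = ((2 * ℓ - 1)‼ / (ℓ - m)! : ℝ) := by
  have hchoose := Nat.choose_mul_factorial_mul_factorial (show ℓ - m ≤ 2 * ℓ by omega)
  rw [show 2 * ℓ - (ℓ - m) = ℓ + m by omega, Nat.factorial_two_mul_eq] at hchoose
  have hchoose' : ((2 * ℓ).choose (ℓ - m) * (ℓ - m)! * (ℓ + m)! : ℝ) =
      2 ^ ℓ * ℓ ! * (2 * ℓ - 1)‼ := by
    exact_mod_cast hchoose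
  field_simp
  linear_combination hchoose'

theorem legP_bounds {ℓ m : ℕ} (hm : m ≤ ℓ) {z : ℝ} (hz : 1 < z) :
    ((2 * ℓ - 1)‼ / (ℓ - m)! : ℝ) * (z - 1) ^ ℓ ≤ legP ℓ m z ∧
      legP ℓ m z ≤ ((2 * ℓ - 1)‼ / (ℓ - m)! : ℝ) * (z + 1) ^ ℓ := by
  have hweights : ∑ k ∈ range (ℓ - m + 1), (ℓ.choose k * ℓ.choose (m + k) : ℝ) =
      (2 * ℓ).choose (ℓ - m) := by
    exact_mod_cast Nat.sum_range_choose_mul_choose_add hm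
  have hexp : ∀ k ∈ range (ℓ - m + 1),
      0 ≤ (ℓ : ℝ) - m / 2 - k ∧ 0 ≤ (m : ℝ) / 2 + k ∧ (ℓ - m / 2 - k) + (m / 2 + k) = (ℓ : ℝ) := by
    intro k hk
    rw [Finset.mem_range] at hk
    have : (k : ℝ) + m ≤ ℓ := by exact_mod_cast (by omega : k + m ≤ ℓ)
    exact ⟨by linarith [(by positivity : (0 : ℝ) ≤ m)], by positivity, by ring⟩
  have hz₀ : 0 < z - 1 := by linarith
  have hz₁ : z - 1 ≤ z + 1 := by linarith
  rw [legP, ← legP_prefactor_mul_choose hm, ← hweights, mul_assoc, mul_assoc, Finset.sum_mul,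
    Finset.sum_mul]
  constructor <;>
    refine mul_le_mul_of_nonneg_left (Finset.sum_le_sum fun k hk => ?_) (by positivity) <;>
    rw [mul_assoc (_ * _ : ℝ)] <;> gcongr
  · exact pow_le_rpow_mul_rpow hz₀ hz₁ (hexp k hk).2.1 (hexp k hk).2.2
  · exact rpow_mul_rpow_le_pow hz₀ hz₁ (hexp k hk).1 (hexp k hk).2.2

theorem legPZ_bounds {ℓ : ℕ} {m : ℤ} (hm : m.natAbs ≤ ℓ) {z : ℝ} (hz : 1 < z) :
    ((2 * ℓ - 1)‼ / ((ℓ : ℤ) - m).toNat ! : ℝ) * (z - 1) ^ ℓ ≤ legPZ ℓ m z ∧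
      legPZ ℓ m z ≤ ((2 * ℓ - 1)‼ / ((ℓ : ℤ) - m).toNat ! : ℝ) * (z + 1) ^ ℓ := by
  obtain ⟨hlow, hup⟩ := legP_bounds hm hz
  unfold legPZ
  split_ifs with hm₀
  · rw [show ((ℓ : ℤ) - m).toNat = ℓ - m.natAbs by omega, show m.toNat = m.natAbs by omega]
    exact ⟨hlow, hup⟩
  · have hcoeff : ((2 * ℓ - 1)‼ / ((ℓ : ℤ) - m).toNat ! : ℝ) =
        (ℓ - m.natAbs)! / (ℓ + m.natAbs)! * ((2 * ℓ - 1)‼ / (ℓ - m.natAbs)!) := by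
      rw [show ((ℓ : ℤ) - m).toNat = ℓ + m.natAbs by omega]
      field_simp
    rw [hcoeff, mul_assoc, mul_assoc]
    constructor <;> gcongr

@[fun_prop]
theorem measurable_legPZ (ℓ : ℕ) (m : ℤ) : Measurable (legPZ ℓ m) := by
  unfold legPZ legP
  split_ifs <;> fun_prop

/-- The constant `C_ℓ^{m} / Γ(2ℓ + 3/2)`. -/
noncomputable def legendreMomentConst (κ : ℝ) (ℓ : ℕ) (m : ℤ) : ℝ :=
  1 / (4 * π ^ 2 * κ ^ (2 * ℓ)) *
    ((2 * ℓ + 1) * Gamma (ℓ + 1 / 2) ^ 2 / ((((ℓ : ℤ) + m).toNat ! : ℝ) * ((ℓ : ℤ) - m).toNat !))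

theorem legendreMomentConst_nonneg (κ : ℝ) (ℓ : ℕ) (m : ℤ) : 0 ≤ legendreMomentConst κ ℓ m := by
  unfold legendreMomentConst
  rw [pow_mul]
  positivity

theorem sq_gammaCoeff_mul_legPZ_coeff {κ : ℝ} (hκ : 0 < κ) (ℓ : ℕ) (m : ℤ) :
    (gammaCoeff ℓ m * ((2 * ℓ - 1)‼ / ((ℓ : ℤ) - m).toNat ! : ℝ)) ^ 2 =
      legendreMomentConst κ ℓ m * (2 * κ) ^ (2 * ℓ) := by
  rw [legendreMomentConst, mul_pow, gammaCoeff, sq_sqrt (by positivity), Gamma_nat_add_half,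
    mul_pow, pow_mul, pow_mul]
  field_simp
  rw [sq_sqrt pi_pos.le, ← pow_mul, ← pow_mul, mul_comm ℓ 2]

theorem sq_gammaCoeff_mul_legPZ_bounds {κ ζ : ℝ} (hκ : 0 < κ) (hζ : 0 < ζ) {ℓ : ℕ} {m : ℤ}
    (hm : m.natAbs ≤ ℓ) :
    legendreMomentConst κ ℓ m * ζ ^ (2 * ℓ) ≤
        (gammaCoeff ℓ m * legPZ ℓ m (1 + ζ / (2 * κ))) ^ 2 ∧
      (gammaCoeff ℓ m * legPZ ℓ m (1 + ζ / (2 * κ))) ^ 2 ≤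
        legendreMomentConst κ ℓ m * (ζ + 4 * κ) ^ (2 * ℓ) := by
  set A : ℝ := gammaCoeff ℓ m * ((2 * ℓ - 1)‼ / ((ℓ : ℤ) - m).toNat ! : ℝ)
  have hA : 0 ≤ A := mul_nonneg (sqrt_nonneg _) (by positivity)
  have hscale : ∀ w : ℝ,
      (A * (w / (2 * κ)) ^ ℓ) ^ 2 = legendreMomentConst κ ℓ m * w ^ (2 * ℓ) := by
    intro w
    rw [mul_pow, sq_gammaCoeff_mul_legPZ_coeff hκ, ← pow_mul, mul_comm ℓ 2, div_pow]
    field_simp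
  have hz : 1 < 1 + ζ / (2 * κ) := by
    simp only [lt_add_iff_pos_right]
    positivity
  obtain ⟨hlow, hup⟩ := legPZ_bounds hm hz
  have hlow' : A * (ζ / (2 * κ)) ^ ℓ ≤ gammaCoeff ℓ m * legPZ ℓ m (1 + ζ / (2 * κ)) := by
    rw [mul_assoc]
    exact mul_le_mul_of_nonneg_left (by simpa using hlow) (sqrt_nonneg _)
  have hup' :
      gammaCoeff ℓ m * legPZ ℓ m (1 + ζ / (2 * κ)) ≤ A * ((ζ + 4 * κ) / (2 * κ)) ^ ℓ := by
    rw [mul_assoc, show (ζ + 4 * κ) / (2 * κ) = 1 + ζ / (2 * κ) + 1 by field_simp; ring]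
    exact mul_le_mul_of_nonneg_left hup (sqrt_nonneg _)
  have h₀ : 0 ≤ A * (ζ / (2 * κ)) ^ ℓ := mul_nonneg hA (by positivity)
  rw [← hscale, ← hscale]
  exact ⟨pow_le_pow_left₀ h₀ hlow' 2, pow_le_pow_left₀ (h₀.trans hlow') hup' 2⟩

theorem legendre_integrand_bounds {κ ζ : ℝ} (hκ : 0 < κ) (hζ : 0 < ζ) {ℓ : ℕ} {m : ℤ}
    (hm : m.natAbs ≤ ℓ) :
    legendreMomentConst κ ℓ m * (exp (-ζ) * ζ ^ (2 * ℓ + 3 / 2 - 1 : ℝ)) ≤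
        (gammaCoeff ℓ m * legPZ ℓ m (1 + ζ / (2 * κ))) ^ 2 * ζ ^ ((1 : ℝ) / 2) * exp (-ζ) ∧
      (gammaCoeff ℓ m * legPZ ℓ m (1 + ζ / (2 * κ))) ^ 2 * ζ ^ ((1 : ℝ) / 2) * exp (-ζ) ≤
        legendreMomentConst κ ℓ m * (exp (-ζ) * (ζ + 4 * κ) ^ (2 * ℓ + 3 / 2 - 1 : ℝ)) := by
  have hsplit : ∀ x : ℝ, 0 < x →
      x ^ (2 * ℓ + 3 / 2 - 1 : ℝ) = x ^ (2 * ℓ) * x ^ ((1 : ℝ) / 2) := by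
    intro x hx
    rw [← rpow_natCast, ← rpow_add hx]
    push_cast
    ring_nf
  have hC := legendreMomentConst_nonneg κ ℓ m
  obtain ⟨hlow, hup⟩ := sq_gammaCoeff_mul_legPZ_bounds hκ hζ hm
  rw [hsplit ζ hζ, hsplit _ (by positivity)]
  constructor
  · calc _ = legendreMomentConst κ ℓ m * ζ ^ (2 * ℓ) * ζ ^ ((1 : ℝ) / 2) * exp (-ζ) := by ring
      _ ≤ _ := by gcongr
  · calc _ ≤ legendreMomentConst κ ℓ m * (ζ + 4 * κ) ^ (2 * ℓ) * ζ ^ ((1 : ℝ) / 2) * exp (-ζ) := by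
          gcongr
      _ ≤ legendreMomentConst κ ℓ m * (ζ + 4 * κ) ^ (2 * ℓ) * (ζ + 4 * κ) ^ ((1 : ℝ) / 2) *
          exp (-ζ) := by gcongr; linarith
      _ = _ := by ring

/-- Two-sided bound `C_ℓ^{m'} ≤ B_ℓ^{m'} ≤ e^{4κ}·C_ℓ^{m'}` for the weighted integral
`B_ℓ^{m'} = ∫₀^∞ [γ_ℓ^{m'} P_ℓ^{m'}(1+ζ/(2κ))]² ζ^{1/2} e^{-ζ} dζ`. -/
theorem herglotz_integral_bounds (κ : ℝ) (hκ : 0 < κ) (ℓ : ℕ) (m' : ℤ)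
    (hm : m'.natAbs ≤ ℓ) :
    (1 / (4 * Real.pi ^ 2 * κ ^ (2 * ℓ))) *
        ((2 * (ℓ : ℝ) + 1) * Real.Gamma ((ℓ : ℝ) + 1 / 2) ^ 2 /
          ((Nat.factorial ((ℓ : ℤ) + m').toNat : ℝ) *
            (Nat.factorial ((ℓ : ℤ) - m').toNat : ℝ))) *
        Real.Gamma (2 * (ℓ : ℝ) + 3 / 2) ≤
      ∫ ζ in Set.Ioi (0 : ℝ),
        (gammaCoeff ℓ m' * legPZ ℓ m' (1 + ζ / (2 * κ))) ^ 2 *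
          ζ ^ ((1 : ℝ) / 2) * Real.exp (-ζ) ∧
    (∫ ζ in Set.Ioi (0 : ℝ),
        (gammaCoeff ℓ m' * legPZ ℓ m' (1 + ζ / (2 * κ))) ^ 2 *
          ζ ^ ((1 : ℝ) / 2) * Real.exp (-ζ)) ≤
      Real.exp (4 * κ) *
        ((1 / (4 * Real.pi ^ 2 * κ ^ (2 * ℓ))) *
          ((2 * (ℓ : ℝ) + 1) * Real.Gamma ((ℓ : ℝ) + 1 / 2) ^ 2 /
            ((Nat.factorial ((ℓ : ℤ) + m').toNat : ℝ) *
              (Nat.factorial ((ℓ : ℤ) - m').toNat : ℝ))) *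
          Real.Gamma (2 * (ℓ : ℝ) + 3 / 2)) := by
  have hF : Measurable fun ζ : ℝ => (gammaCoeff ℓ m' * legPZ ℓ m' (1 + ζ / (2 * κ))) ^ 2 *
      ζ ^ ((1 : ℝ) / 2) * Real.exp (-ζ) := by fun_prop
  exact mul_Gamma_le_integral_le_exp_mul_Gamma (by positivity) (legendreMomentConst_nonneg κ ℓ m')
    (by positivity) hF.aestronglyMeasurable (fun ζ hζ => (legendre_integrand_bounds hκ hζ hm).1)
    (fun ζ hζ => (legendre_integrand_bounds hκ hζ hm).2)
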